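/- arXiv:1305.1433 — 2 statements merged into one kernel-verified Lean document; each statement's English description precedes it below -/
import Mathlib

section
/- Let (𝒰,𝒱) be a cotorsion pair on an exact category 𝓑 with enough projectives and injectives, and let 𝒲 = 𝒰 ∩ 𝒱. For any object B ∈ 𝓑⁺ and any object U ∈ 𝒰, every morphism U → B factors through an object of 𝒲; i.e., Hom_{𝓑/𝒲}(U, B) = 0 in the additive quotient 𝓑/𝒲. -/
open CategoryTheory Limits ZeroObject

universe v u

variable (C : Type u) [Category.{v} C] [Preadditive C] [HasZeroObject C]
  [HasBinaryBiproducts C]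

/-- An exact structure (in the sense of Quillen) on an additive category,
given by a class of short exact sequences (conflations). -/
structure ExactStructure : Type (max u (v + 1)) where
  /-- the class of short exact sequences -/
  IsSES : ∀ {A B X : C}, (A ⟶ B) → (B ⟶ X) → Prop
  comp_zero : ∀ {A B X : C} {f : A ⟶ B} {g : B ⟶ X}, IsSES f g → f ≫ g = 0
  isKernel : ∀ {A B X : C} {f : A ⟶ B} {g : B ⟶ X} (h : IsSES f g),
      Nonempty (IsLimit (KernelFork.ofι f (comp_zero h)))
  isCokernel : ∀ {A B X : C} {f : A ⟶ B} {g : B ⟶ X} (h : IsSES f g),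
      Nonempty (IsColimit (CokernelCofork.ofπ g (comp_zero h)))
  ses_iso_congr : ∀ {A B X A' B' X' : C} {f : A ⟶ B} {g : B ⟶ X}
      (eA : A' ≅ A) (eB : B ≅ B') (eX : X ≅ X'), IsSES f g →
      IsSES (eA.hom ≫ f ≫ eB.hom) (eB.inv ≫ g ≫ eX.hom)
  id_ses : ∀ A : C, IsSES (𝟙 A) (0 : A ⟶ 0)
  id_ses' : ∀ A : C, IsSES (0 : (0 : C) ⟶ A) (𝟙 A)
  infl_comp : ∀ {A B X : C} (f : A ⟶ B) (f' : B ⟶ X),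
      (∃ (Z : C) (g : B ⟶ Z), IsSES f g) → (∃ (Z : C) (g : X ⟶ Z), IsSES f' g) →
      ∃ (Z : C) (g : X ⟶ Z), IsSES (f ≫ f') g
  defl_comp : ∀ {A B X : C} (g : A ⟶ B) (g' : B ⟶ X),
      (∃ (Z : C) (f : Z ⟶ A), IsSES f g) → (∃ (Z : C) (f : Z ⟶ B), IsSES f g') →
      ∃ (Z : C) (f : Z ⟶ A), IsSES f (g ≫ g')
  pushout_infl : ∀ {A B A' : C} (f : A ⟶ B) (a : A ⟶ A'),
      (∃ (Z : C) (g : B ⟶ Z), IsSES f g) →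
      ∃ (P : C) (f' : A' ⟶ P) (b : B ⟶ P), IsPushout a f f' b ∧
        ∃ (Z : C) (g : P ⟶ Z), IsSES f' g
  pullback_defl : ∀ {B X X' : C} (g : B ⟶ X) (x : X' ⟶ X),
      (∃ (Z : C) (f : Z ⟶ B), IsSES f g) →
      ∃ (P : C) (g' : P ⟶ X') (b : P ⟶ B), IsPullback g' b x g ∧
        ∃ (Z : C) (f : Z ⟶ P), IsSES f g'

variable {C}

namespace ExactStructure

variable (E : ExactStructure C)

/-- inflations (admissible monomorphisms) -/
def Infl {A B : C} (f : A ⟶ B) : Prop := ∃ (X : C) (g : B ⟶ X), E.IsSES f g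

/-- deflations (admissible epimorphisms) -/
def Defl {B X : C} (g : B ⟶ X) : Prop := ∃ (A : C) (f : A ⟶ B), E.IsSES f g

/-- projective objects relative to the exact structure -/
def Proj (P : C) : Prop :=
  ∀ ⦃B X : C⦄ (g : B ⟶ X), E.Defl g → ∀ h : P ⟶ X, ∃ l : P ⟶ B, l ≫ g = h

/-- injective objects relative to the exact structure -/
def Inj (I : C) : Prop :=
  ∀ ⦃A B : C⦄ (f : A ⟶ B), E.Infl f → ∀ h : A ⟶ I, ∃ l : B ⟶ I, f ≫ l = h

/-- the exact category has enough projectives -/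
def EnoughProj : Prop :=
  ∀ X : C, ∃ (P K : C) (i : K ⟶ P) (p : P ⟶ X), E.Proj P ∧ E.IsSES i p

/-- the exact category has enough injectives -/
def EnoughInj : Prop :=
  ∀ X : C, ∃ (I Z : C) (i : X ⟶ I) (p : I ⟶ Z), E.Inj I ∧ E.IsSES i p

end ExactStructure

/-- a morphism factors through an object of a given class of objects -/
def FactorsThru (S : Set C) {X Y : C} (f : X ⟶ Y) : Prop :=
  ∃ (W : C) (a : X ⟶ W) (b : W ⟶ Y), W ∈ S ∧ a ≫ b = f

/-- A cotorsion pair `(𝒰, 𝒱)` on the exact category `(C, E)`. -/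
structure CotorsionPair (E : ExactStructure C) where
  U : Set C
  V : Set C
  U_summand : ∀ ⦃X Z : C⦄, Z ∈ U → (∃ (i : X ⟶ Z) (r : Z ⟶ X), i ≫ r = 𝟙 X) → X ∈ U
  V_summand : ∀ ⦃X Z : C⦄, Z ∈ V → (∃ (i : X ⟶ Z) (r : Z ⟶ X), i ≫ r = 𝟙 X) → X ∈ V
  U_add : ∀ ⦃X Y : C⦄, X ∈ U → Y ∈ U → (X ⊞ Y) ∈ U
  V_add : ∀ ⦃X Y : C⦄, X ∈ V → Y ∈ V → (X ⊞ Y) ∈ V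
  ext_vanish : ∀ ⦃A B X : C⦄ {f : A ⟶ B} {g : B ⟶ X}, E.IsSES f g → X ∈ U → A ∈ V →
      ∃ r : B ⟶ A, f ≫ r = 𝟙 A
  res : ∀ B : C, ∃ (VB UB : C) (i : VB ⟶ UB) (p : UB ⟶ B),
      VB ∈ V ∧ UB ∈ U ∧ E.IsSES i p
  cores : ∀ B : C, ∃ (VB UB : C) (i : B ⟶ VB) (p : VB ⟶ UB),
      VB ∈ V ∧ UB ∈ U ∧ E.IsSES i p

namespace CotorsionPair

variable {E : ExactStructure C} (CP : CotorsionPair E)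

/-- `𝒲 = 𝒰 ∩ 𝒱` -/
def W : Set C := CP.U ∩ CP.V

/-- `𝓑⁺`: objects admitting a short exact sequence `V ↣ W ↠ B` with `V ∈ 𝒱`, `W ∈ 𝒲`. -/
def Bplus : Set C :=
  {B | ∃ (V₀ W₀ : C) (i : V₀ ⟶ W₀) (p : W₀ ⟶ B), V₀ ∈ CP.V ∧ W₀ ∈ CP.W ∧ E.IsSES i p}

/-- `𝓑⁻`: objects admitting a short exact sequence `B ↣ W ↠ U` with `W ∈ 𝒲`, `U ∈ 𝒰`. -/
def Bminus : Set C :=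
  {B | ∃ (W₀ U₀ : C) (i : B ⟶ W₀) (p : W₀ ⟶ U₀), W₀ ∈ CP.W ∧ U₀ ∈ CP.U ∧ E.IsSES i p}

/-- the heart subcategory `𝓗 = 𝓑⁺ ∩ 𝓑⁻` -/
def Heart : Set C := CP.Bplus ∩ CP.Bminus

/-- the ideal relation defining the additive quotient `𝓑/𝒲` -/
def wRel : HomRel C := fun {X Y} f g =>
  ∃ (W : C) (a : X ⟶ W) (b : W ⟶ Y), W ∈ CP.W ∧ a ≫ b = f - g

/-- the quotient category `𝓑/𝒲` -/
abbrev QW := CategoryTheory.Quotient CP.wRel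

/-- the quotient functor `π : 𝓑 → 𝓑/𝒲` -/
abbrev qf : C ⥤ CP.QW := Quotient.functor _

/-- `𝓑⁺/𝒲` as a full subcategory of `𝓑/𝒲` -/
abbrev BplusCat := ObjectProperty.FullSubcategory (fun X : CP.QW => X.as ∈ CP.Bplus)

/-- `𝓑⁻/𝒲` as a full subcategory of `𝓑/𝒲` -/
abbrev BminusCat := ObjectProperty.FullSubcategory (fun X : CP.QW => X.as ∈ CP.Bminus)

/-- the heart `𝓗/𝒲` as a full subcategory of `𝓑/𝒲` -/
abbrev HeartCat := ObjectProperty.FullSubcategory (fun X : CP.QW => X.as ∈ CP.Heart)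

/-- the inclusion `𝓑⁺/𝒲 ↪ 𝓑/𝒲` -/
abbrev inclPlus : CP.BplusCat ⥤ CP.QW := ObjectProperty.ι _

/-- the inclusion `𝓑⁻/𝒲 ↪ 𝓑/𝒲` -/
abbrev inclMinus : CP.BminusCat ⥤ CP.QW := ObjectProperty.ι _

/-- the inclusion `𝓗/𝒲 ↪ 𝓑/𝒲` -/
abbrev inclHeart : CP.HeartCat ⥤ CP.QW := ObjectProperty.ι _

/-- `add(𝒰 ∗ 𝒱)`: objects `X` admitting a short exact sequence `U ↣ X ⊕ Y ↠ V`
with `U ∈ 𝒰`, `V ∈ 𝒱`. -/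
def addUV : Set C :=
  {X | ∃ (Y U₀ V₀ : C) (i : U₀ ⟶ X ⊞ Y) (p : X ⊞ Y ⟶ V₀),
    U₀ ∈ CP.U ∧ V₀ ∈ CP.V ∧ E.IsSES i p}

end CotorsionPair


/-!
Pull the deflation `p : W₀ ↠ B` back along `f`. The kernel of the pulled-back deflation
`P ↠ U` is a retract of the kernel `V₀ ∈ 𝒱` of `p`, so it lies in `𝒱`; as `U ∈ 𝒰` and
`Ext¹(𝒰, 𝒱) = 0`, the conflation splits, and a section `s : U ⟶ P` factors `f` as
`s ≫ b ≫ p` through `W₀ ∈ 𝒲`.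
-/

section

variable {D : Type*} [Category D] [Preadditive D]

theorem CategoryTheory.Limits.CokernelCofork.IsColimit.exists_section_of_retraction
    {X Y Z : D} {f : X ⟶ Y} {g : Y ⟶ Z} {w : f ≫ g = 0}
    (hc : IsColimit (CokernelCofork.ofπ g w)) {r : Y ⟶ X} (hr : f ≫ r = 𝟙 X) :
    ∃ s : Z ⟶ Y, s ≫ g = 𝟙 Z := by
  have hfr : f ≫ (𝟙 Y - r ≫ f) = 0 := by
    rw [Preadditive.comp_sub, Category.comp_id, ← Category.assoc, hr, Category.id_comp,
      sub_self]
  obtain ⟨s, hs⟩ := CokernelCofork.IsColimit.desc' hc (𝟙 Y - r ≫ f) hfr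
  refine ⟨s, Cofork.IsColimit.hom_ext hc ?_⟩
  simp only [Cofork.π_ofπ] at hs ⊢
  rw [← Category.assoc, hs, Preadditive.sub_comp, Category.assoc, w]
  simp

theorem CategoryTheory.IsPullback.exists_retract_of_isLimit_kernelFork
    {Z P U V W B : D} {k : Z ⟶ P} {g : P ⟶ U} {b : P ⟶ W} {f : U ⟶ B} {i : V ⟶ W}
    {p : W ⟶ B} (hpb : IsPullback g b f p) {wk : k ≫ g = 0} {wi : i ≫ p = 0}
    (hk : IsLimit (KernelFork.ofι k wk)) (hi : IsLimit (KernelFork.ofι i wi)) :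
    ∃ (u : Z ⟶ V) (v : V ⟶ Z), u ≫ v = 𝟙 Z := by
  have hcomm : (0 : V ⟶ U) ≫ f = i ≫ p := by rw [wi, zero_comp]
  obtain ⟨v, hv⟩ := KernelFork.IsLimit.lift' hk (hpb.lift 0 i hcomm) (hpb.lift_fst 0 i hcomm)
  have hkb : (k ≫ b) ≫ p = 0 := by
    rw [Category.assoc, ← hpb.w, ← Category.assoc, wk, zero_comp]
  obtain ⟨u, hu⟩ := KernelFork.IsLimit.lift' hi (k ≫ b) hkb
  simp only [Fork.ι_ofι] at hv hu
  refine ⟨u, v, Fork.IsLimit.hom_ext hk ?_⟩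
  simp only [Fork.ι_ofι, Category.assoc, hv, Category.id_comp]
  apply hpb.hom_ext
  · simp [wk]
  · simp [hu]

end

namespace CotorsionPair

variable {E : ExactStructure C} (CP : CotorsionPair E)

theorem exists_section_of_isSES {A X Y : C} {f : A ⟶ X} {g : X ⟶ Y} (h : E.IsSES f g)
    (hY : Y ∈ CP.U) (hA : A ∈ CP.V) : ∃ s : Y ⟶ X, s ≫ g = 𝟙 Y :=
  have ⟨_, hr⟩ := CP.ext_vanish h hY hA
  CokernelCofork.IsColimit.exists_section_of_retraction (E.isCokernel h).some hr

end CotorsionPair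

theorem stmt4_general (E : ExactStructure C) (CP : CotorsionPair E)
    {B U : C} (hB : B ∈ CP.Bplus) (hU : U ∈ CP.U) (f : U ⟶ B) :
    FactorsThru CP.W f := by
  obtain ⟨V₀, W₀, i, p, hV₀, hW₀, hip⟩ := hB
  obtain ⟨P, g, b, hpb, Z, k, hkg⟩ := E.pullback_defl p f ⟨V₀, i, hip⟩
  have hZ : Z ∈ CP.V := CP.V_summand hV₀
    (hpb.exists_retract_of_isLimit_kernelFork (E.isKernel hkg).some (E.isKernel hip).some)
  obtain ⟨s, hs⟩ := CP.exists_section_of_isSES hkg hU hZ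
  refine ⟨W₀, s ≫ b, p, hW₀, ?_⟩
  rw [Category.assoc, ← hpb.w, ← Category.assoc, hs, Category.id_comp]

/-- for `B ∈ 𝓑⁺` and `U ∈ 𝒰`, every morphism `U ⟶ B` factors through `𝒲`,
i.e. `Hom_{𝓑/𝒲}(U, B) = 0`. -/
theorem stmt4 (E : ExactStructure C) (CP : CotorsionPair E)
    (hEP : E.EnoughProj) (hEI : E.EnoughInj)
    {B U : C} (hB : B ∈ CP.Bplus) (hU : U ∈ CP.U) (f : U ⟶ B) :
    FactorsThru CP.W f :=
  stmt4_general E CP hB hU f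
end

section
/- Let (𝒰,𝒱) be a cotorsion pair on an exact category 𝓑 with enough projectives and injectives, 𝒲 = 𝒰∩𝒱. For a morphism f : A → B in 𝓑, the image σ⁺(f) : A⁺ → B⁺ of f under the reflection functor σ⁺ is zero in 𝓑/𝒲 if and only if f factors through an object of 𝒰. In particular, σ⁺(B) = 0 in 𝓑/𝒲 if and only if B ∈ 𝒰 (up to isomorphism in 𝓑/𝒲). -/
open CategoryTheory Limits ZeroObject

universe v u

variable (C : Type u) [Category.{v} C] [Preadditive C] [HasZeroObject C]
  [HasBinaryBiproducts C]

variable {C}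

/-!
The object `B⁺` comes with a deflation `W⁰ ↠ B⁺` whose kernel `V_B ↣ U_B ↣ W⁰` lies in `𝒱`.
Since `Ext¹(𝒰, 𝒱) = 0`, every map from an object of `𝒰` to `B⁺` lifts to `W⁰ ∈ 𝒲`, so for maps
into `B⁺` factoring through `𝒰` and factoring through `𝒲` are the same. Dually, `A⁺` is an
extension of `U⁰ ∈ 𝒰` by `A`, and a map out of `A⁺` whose restriction to `A` factors through `𝒲`
factors through `𝒰`. Together these give: `f` factors through `𝒰` ⇒ `σ⁺(f)` factors through `𝒲`.
Conversely, if `f ≫ α_B` factors through `W⁰`, then, `α_B` being mono, the push-out square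
defining `B⁺` lets `f` factor through `U_B ∈ 𝒰`.
-/

namespace ExactStructure

omit [HasBinaryBiproducts C]

variable {E : ExactStructure C}

lemma mono_of_isSES {A B X : C} {f : A ⟶ B} {g : B ⟶ X} (h : E.IsSES f g) : Mono f := by
  obtain ⟨hl⟩ := E.isKernel h
  exact ⟨fun a b hab => Fork.IsLimit.hom_ext hl (by simpa using hab)⟩

lemma epi_of_isSES {A B X : C} {f : A ⟶ B} {g : B ⟶ X} (h : E.IsSES f g) : Epi g := by
  obtain ⟨hc⟩ := E.isCokernel h
  exact ⟨fun a b hab => Cofork.IsColimit.hom_ext hc (by simpa using hab)⟩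

lemma exists_lift_of_isSES {A B X : C} {f : A ⟶ B} {g : B ⟶ X} (h : E.IsSES f g)
    {T : C} (t : T ⟶ B) (ht : t ≫ g = 0) : ∃ s : T ⟶ A, s ≫ f = t := by
  obtain ⟨hl⟩ := E.isKernel h
  obtain ⟨l, hl'⟩ := KernelFork.IsLimit.lift' hl t ht
  exact ⟨l, by simpa using hl'⟩

lemma exists_desc_of_isSES {A B X : C} {f : A ⟶ B} {g : B ⟶ X} (h : E.IsSES f g)
    {T : C} (t : B ⟶ T) (ht : f ≫ t = 0) : ∃ s : X ⟶ T, g ≫ s = t := by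
  obtain ⟨hc⟩ := E.isCokernel h
  obtain ⟨l, hl'⟩ := CokernelCofork.IsColimit.desc' hc t ht
  exact ⟨l, by simpa using hl'⟩

lemma isSES_of_isLimit {A A' B X : C} {f : A ⟶ B} {g : B ⟶ X} (h : E.IsSES f g)
    {f' : A' ⟶ B} (w : f' ≫ g = 0) (hl : IsLimit (KernelFork.ofι f' w)) :
    E.IsSES f' g := by
  obtain ⟨hl₀⟩ := E.isKernel h
  let e : A' ≅ A := IsLimit.conePointUniqueUpToIso hl hl₀
  have he : e.hom ≫ f = f' := by
    simpa using IsLimit.conePointUniqueUpToIso_hom_comp hl hl₀ WalkingParallelPair.zero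
  simpa [he] using E.ses_iso_congr e (Iso.refl B) (Iso.refl X) h

lemma isSES_of_isColimit {A B X X' : C} {f : A ⟶ B} {g : B ⟶ X} (h : E.IsSES f g)
    {g' : B ⟶ X'} (w : f ≫ g' = 0) (hc : IsColimit (CokernelCofork.ofπ g' w)) :
    E.IsSES f g' := by
  obtain ⟨hc₀⟩ := E.isCokernel h
  let e : X ≅ X' := IsColimit.coconePointUniqueUpToIso hc₀ hc
  have he : g ≫ e.hom = g' := by
    simpa using IsColimit.comp_coconePointUniqueUpToIso_hom hc₀ hc WalkingParallelPair.one
  simpa [he] using E.ses_iso_congr (Iso.refl A) (Iso.refl B) e h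

lemma exists_isPullback_isSES {K B X X' : C} {k : K ⟶ B} {p : B ⟶ X} (h : E.IsSES k p)
    (x : X' ⟶ X) :
    ∃ (P : C) (p' : P ⟶ X') (b : P ⟶ B) (k' : K ⟶ P),
      IsPullback p' b x p ∧ E.IsSES k' p' ∧ k' ≫ b = k := by
  obtain ⟨P, p', b, hpb, Z, fZ, hZ⟩ := E.pullback_defl p x ⟨K, k, h⟩
  let k' : K ⟶ P := hpb.lift 0 k (by simp [E.comp_zero h])
  have hk'p' : k' ≫ p' = 0 := hpb.lift_fst _ _ _
  have hk'b : k' ≫ b = k := hpb.lift_snd _ _ _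
  have := E.mono_of_isSES h
  have : Mono k' := mono_of_mono_fac hk'b
  have hlim : IsLimit (KernelFork.ofι k' hk'p') := by
    refine KernelFork.IsLimit.ofι' _ _ (fun {T} t ht => ?_)
    have h0 : (t ≫ b) ≫ p = 0 := by
      rw [Category.assoc, ← hpb.w, reassoc_of% ht, zero_comp]
    have hs := (E.exists_lift_of_isSES h (t ≫ b) h0).choose_spec
    exact ⟨_, hpb.hom_ext (by simp [hk'p', ht]) (by rw [Category.assoc, hk'b, hs])⟩
  exact ⟨P, p', b, k', hpb, E.isSES_of_isLimit hZ hk'p' hlim, hk'b⟩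

lemma exists_isPushout_isSES {A B X A' : C} {i : A ⟶ B} {q : B ⟶ X} (h : E.IsSES i q)
    (a : A ⟶ A') :
    ∃ (P : C) (i' : A' ⟶ P) (b : B ⟶ P) (q' : P ⟶ X),
      IsPushout a i i' b ∧ E.IsSES i' q' ∧ b ≫ q' = q := by
  obtain ⟨P, i', b, hpo, Z, g, hZ⟩ := E.pushout_infl i a ⟨X, q, h⟩
  let q' : P ⟶ X := hpo.desc 0 q (by simp [E.comp_zero h])
  have hi'q' : i' ≫ q' = 0 := hpo.inl_desc _ _ _
  have hbq' : b ≫ q' = q := hpo.inr_desc _ _ _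
  have := E.epi_of_isSES h
  have : Epi q' := epi_of_epi_fac hbq'
  have hcolim : IsColimit (CokernelCofork.ofπ q' hi'q') := by
    refine CokernelCofork.IsColimit.ofπ' _ _ (fun {T} t ht => ?_)
    have h0 : i ≫ (b ≫ t) = 0 := by
      rw [← Category.assoc, ← hpo.w, Category.assoc, ht, Limits.comp_zero]
    have hs := (E.exists_desc_of_isSES h (b ≫ t) h0).choose_spec
    exact ⟨_, hpo.hom_ext (by simp [reassoc_of% hi'q', ht]) (by rw [reassoc_of% hbq', hs])⟩
  exact ⟨P, i', b, q', hpo, E.isSES_of_isColimit hZ hi'q' hcolim, hbq'⟩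

lemma isSES_comp_of_isPushout {V U B W Bp : C} {v : V ⟶ U} {u : U ⟶ B}
    {w' : U ⟶ W} {α : B ⟶ Bp} {w : W ⟶ Bp}
    (h : E.IsSES v u) (hw' : E.Infl w') (hpo : IsPushout u w' α w) :
    E.IsSES (v ≫ w') w := by
  obtain ⟨Z, g, hZ⟩ := E.infl_comp v w' ⟨B, u, h⟩ hw'
  have hzero : (v ≫ w') ≫ w = 0 := by
    rw [Category.assoc, ← hpo.w, ← Category.assoc, E.comp_zero h, zero_comp]
  have : Epi w := hpo.epi_inr_of_epi (E.epi_of_isSES h)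
  have hcolim : IsColimit (CokernelCofork.ofπ w hzero) := by
    refine CokernelCofork.IsColimit.ofπ' _ _ (fun {T} t ht => ?_)
    have hs := (E.exists_desc_of_isSES h (w' ≫ t) (by rw [← Category.assoc]; exact ht)).choose_spec
    exact ⟨hpo.desc _ t hs, hpo.inr_desc _ _ _⟩
  exact E.isSES_of_isColimit hZ hzero hcolim

/-- The push-out square of `u` along the inflation `w'` is weakly cartesian once `α` is mono. -/
lemma exists_lift_of_isPushout {U B W U₀ Bp : C} {u : U ⟶ B} {w' : U ⟶ W} {w₀ : W ⟶ U₀}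
    {α : B ⟶ Bp} {w : W ⟶ Bp} (h : E.IsSES w' w₀) (hpo : IsPushout u w' α w) [Mono α]
    {A : C} (f : A ⟶ B) (g : A ⟶ W) (hfg : f ≫ α = g ≫ w) :
    ∃ l : A ⟶ U, l ≫ u = f := by
  let φ : Bp ⟶ U₀ := hpo.desc 0 w₀ (by rw [E.comp_zero h, Limits.comp_zero])
  have hαφ : α ≫ φ = 0 := hpo.inl_desc _ _ _
  have hwφ : w ≫ φ = w₀ := hpo.inr_desc _ _ _
  have hg : g ≫ w₀ = 0 := by
    rw [← hwφ, ← Category.assoc, ← hfg, Category.assoc, hαφ, Limits.comp_zero]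
  obtain ⟨l, hl⟩ := E.exists_lift_of_isSES h g hg
  refine ⟨l, (cancel_mono α).1 ?_⟩
  rw [Category.assoc, hpo.w, reassoc_of% hl, hfg]

end ExactStructure

section FactorsThru

omit [Preadditive C] [HasZeroObject C] [HasBinaryBiproducts C]

lemma FactorsThru.mono {S T : Set C} (hST : S ⊆ T) {X Y : C} {f : X ⟶ Y}
    (hf : FactorsThru S f) : FactorsThru T f := by
  obtain ⟨W, a, b, hW, hab⟩ := hf
  exact ⟨W, a, b, hST hW, hab⟩

lemma FactorsThru.precomp {S : Set C} {X Y Z : C} {f : Y ⟶ Z} (hf : FactorsThru S f)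
    (g : X ⟶ Y) : FactorsThru S (g ≫ f) := by
  obtain ⟨W, a, b, hW, rfl⟩ := hf
  exact ⟨W, g ≫ a, b, hW, Category.assoc _ _ _⟩

lemma FactorsThru.postcomp {S : Set C} {X Y Z : C} {f : X ⟶ Y} (hf : FactorsThru S f)
    (g : Y ⟶ Z) : FactorsThru S (f ≫ g) := by
  obtain ⟨W, a, b, hW, rfl⟩ := hf
  exact ⟨W, a, b ≫ g, hW, (Category.assoc _ _ _).symm⟩

end FactorsThru

omit [HasZeroObject C] in
lemma FactorsThru.add {S : Set C} (hS : ∀ ⦃X Y : C⦄, X ∈ S → Y ∈ S → (X ⊞ Y) ∈ S)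
    {X Y : C} {f g : X ⟶ Y} (hf : FactorsThru S f) (hg : FactorsThru S g) :
    FactorsThru S (f + g) := by
  obtain ⟨W₁, a₁, b₁, hW₁, rfl⟩ := hf
  obtain ⟨W₂, a₂, b₂, hW₂, rfl⟩ := hg
  exact ⟨W₁ ⊞ W₂, biprod.lift a₁ a₂, biprod.desc b₁ b₂, hS hW₁ hW₂, biprod.lift_desc⟩

namespace CotorsionPair

variable {E : ExactStructure C} (CP : CotorsionPair E)

lemma W_subset_U : CP.W ⊆ CP.U := Set.inter_subset_left

lemma zero_mem_W : (0 : C) ∈ CP.W := by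
  obtain ⟨V₀, U₀, -, -, hV₀, hU₀, -⟩ := CP.res (0 : C)
  have h0 (Z : C) : ∃ (i : (0 : C) ⟶ Z) (r : Z ⟶ 0), i ≫ r = 𝟙 0 :=
    ⟨0, 0, (isZero_zero C).eq_of_src _ _⟩
  exact ⟨CP.U_summand hU₀ (h0 _), CP.V_summand hV₀ (h0 _)⟩

lemma W_add ⦃X Y : C⦄ (hX : X ∈ CP.W) (hY : Y ∈ CP.W) : (X ⊞ Y) ∈ CP.W :=
  ⟨CP.U_add hX.1 hY.1, CP.V_add hX.2 hY.2⟩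

lemma wRel_refl {X Y : C} (f : X ⟶ Y) : CP.wRel f f :=
  ⟨0, 0, 0, CP.zero_mem_W, by simp⟩

instance : Congruence CP.wRel where
  equivalence := by
    refine ⟨CP.wRel_refl, ?_, ?_⟩
    · rintro f g ⟨W₀, a, b, hW, hab⟩
      exact ⟨W₀, -a, b, hW, by rw [Preadditive.neg_comp, hab, neg_sub]⟩
    · rintro f g h hfg hgh
      have hfh := FactorsThru.add CP.W_add hfg hgh
      rwa [sub_add_sub_cancel] at hfh
  comp_left := by
    rintro X Y Z f g g' ⟨W₀, a, b, hW, hab⟩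
    exact ⟨W₀, f ≫ a, b, hW, by rw [Category.assoc, hab, Preadditive.comp_sub]⟩
  comp_right := by
    rintro X Y Z f f' g ⟨W₀, a, b, hW, hab⟩
    exact ⟨W₀, a, b ≫ g, hW, by rw [← Category.assoc, hab, Preadditive.sub_comp]⟩

lemma factorsThru_W_iff_of_wRel {X Y : C} {f g : X ⟶ Y} (h : CP.wRel f g) :
    FactorsThru CP.W f ↔ FactorsThru CP.W g := by
  have hfg : FactorsThru CP.W (f - g) := h
  constructor
  · intro hf
    simpa using FactorsThru.add CP.W_add hf (hfg.precomp (-𝟙 X))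
  · intro hg
    simpa using FactorsThru.add CP.W_add hg hfg

lemma exists_lift_of_mem_U {K B X : C} {k : K ⟶ B} {p : B ⟶ X} (h : E.IsSES k p)
    (hK : K ∈ CP.V) {U : C} (hU : U ∈ CP.U) (x : U ⟶ X) :
    ∃ l : U ⟶ B, l ≫ p = x := by
  obtain ⟨P, p', b, k', hpb, hses, -⟩ := E.exists_isPullback_isSES h x
  -- the pulled-back extension of `U ∈ 𝒰` by `K ∈ 𝒱` splits
  obtain ⟨r, hr⟩ := CP.ext_vanish hses hU hK
  obtain ⟨s, hs⟩ := E.exists_desc_of_isSES hses (𝟙 P - r ≫ k') (by simp [reassoc_of% hr])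
  have hsp' : s ≫ p' = 𝟙 U := by
    have := E.epi_of_isSES hses
    rw [← cancel_epi p', reassoc_of% hs]
    simp [E.comp_zero hses]
  exact ⟨s ≫ b, by rw [Category.assoc, ← hpb.w, reassoc_of% hsp']⟩

lemma exists_extend_of_mem_V {A B X : C} {i : A ⟶ B} {q : B ⟶ X} (h : E.IsSES i q)
    (hX : X ∈ CP.U) {V : C} (hV : V ∈ CP.V) (a : A ⟶ V) :
    ∃ l : B ⟶ V, i ≫ l = a := by
  obtain ⟨P, i', b, _, hpo, hses, -⟩ := E.exists_isPushout_isSES h a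
  obtain ⟨r, hr⟩ := CP.ext_vanish hses hX hV
  exact ⟨b ≫ r, by rw [← Category.assoc, ← hpo.w, Category.assoc, hr, Category.comp_id]⟩

lemma exists_lift_of_factorsThru_U {K W₀ Y : C} {k : K ⟶ W₀} {p : W₀ ⟶ Y}
    (h : E.IsSES k p) (hK : K ∈ CP.V) {X : C} {g : X ⟶ Y} (hg : FactorsThru CP.U g) :
    ∃ t : X ⟶ W₀, t ≫ p = g := by
  obtain ⟨U, a, b, hU, rfl⟩ := hg
  obtain ⟨l, hl⟩ := CP.exists_lift_of_mem_U h hK hU b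
  exact ⟨a ≫ l, by rw [Category.assoc, hl]⟩

lemma factorsThru_W_of_factorsThru_U {K W₀ Y : C} {k : K ⟶ W₀} {p : W₀ ⟶ Y}
    (h : E.IsSES k p) (hK : K ∈ CP.V) (hW₀ : W₀ ∈ CP.W) {X : C} {g : X ⟶ Y}
    (hg : FactorsThru CP.U g) : FactorsThru CP.W g := by
  obtain ⟨t, ht⟩ := CP.exists_lift_of_factorsThru_U h hK hg
  exact ⟨W₀, t, p, hW₀, ht⟩

lemma factorsThru_U_of_factorsThru_W_comp {A Ap U₀ : C} {α : A ⟶ Ap} {p : Ap ⟶ U₀}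
    (h : E.IsSES α p) (hU₀ : U₀ ∈ CP.U) {Y : C} {g : Ap ⟶ Y}
    (hg : FactorsThru CP.W (α ≫ g)) : FactorsThru CP.U g := by
  obtain ⟨W, a, b, hW, hab⟩ := hg
  obtain ⟨m, hm⟩ := CP.exists_extend_of_mem_V h hU₀ hW.2 a
  obtain ⟨n, hn⟩ := E.exists_desc_of_isSES h (g - m ≫ b)
    (by rw [Preadditive.comp_sub, reassoc_of% hm, hab, sub_self])
  have hg : g = m ≫ b + p ≫ n := by rw [hn]; abel
  rw [hg]
  exact FactorsThru.add CP.U_add ⟨W, m, b, hW.1, rfl⟩ ⟨U₀, p, n, hU₀, rfl⟩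

theorem factorsThru_W_iff_factorsThru_U_of_wRel {A B : C} {f : A ⟶ B}
    {U0A Ap : C} {αA : A ⟶ Ap} {pA : Ap ⟶ U0A} (hU0A : U0A ∈ CP.U) (h3A : E.IsSES αA pA)
    {VB UB W0B U0B Bp : C} {vB : VB ⟶ UB} {uB : UB ⟶ B} {wB' : UB ⟶ W0B}
    {w0B : W0B ⟶ U0B} {αB : B ⟶ Bp} {wB : W0B ⟶ Bp} {pB : Bp ⟶ U0B}
    (hVB : VB ∈ CP.V) (hUB : UB ∈ CP.U) (hW0B : W0B ∈ CP.W)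
    (h1B : E.IsSES vB uB) (h2B : E.IsSES wB' w0B)
    (hpoB : IsPushout uB wB' αB wB) (h3B : E.IsSES αB pB)
    {fp : Ap ⟶ Bp} (hfp : CP.wRel (αA ≫ fp) (f ≫ αB)) :
    FactorsThru CP.W fp ↔ FactorsThru CP.U f := by
  have hB : E.IsSES (vB ≫ wB') wB := E.isSES_comp_of_isPushout h1B ⟨U0B, w0B, h2B⟩ hpoB
  constructor
  · intro hfp'
    have hfαB := (CP.factorsThru_W_iff_of_wRel hfp).1 (hfp'.precomp αA)
    obtain ⟨t, ht⟩ := CP.exists_lift_of_factorsThru_U hB hVB (hfαB.mono CP.W_subset_U)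
    have := E.mono_of_isSES h3B
    obtain ⟨l, hl⟩ := E.exists_lift_of_isPushout h2B hpoB f t ht.symm
    exact ⟨UB, l, uB, hUB, hl⟩
  · intro hf
    have hfαB := CP.factorsThru_W_of_factorsThru_U hB hVB hW0B (hf.postcomp αB)
    have hαAfp := CP.factorsThru_U_of_factorsThru_W_comp h3A hU0A
      ((CP.factorsThru_W_iff_of_wRel hfp).2 hfαB)
    exact CP.factorsThru_W_of_factorsThru_U hB hVB hW0B hαAfp

lemma factorsThru_U_id_iff (B : C) :
    FactorsThru CP.U (𝟙 B) ↔ ∃ U₁ ∈ CP.U, Nonempty (CP.qf.obj B ≅ CP.qf.obj U₁) := by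
  constructor
  · rintro ⟨U₁, a, b, hU₁, hab⟩
    exact ⟨B, CP.U_summand hU₁ ⟨a, b, hab⟩, ⟨Iso.refl _⟩⟩
  · rintro ⟨U₁, hU₁, ⟨e⟩⟩
    obtain ⟨g, hg⟩ := CP.qf.map_surjective e.hom
    obtain ⟨h, hh⟩ := CP.qf.map_surjective e.inv
    have hgh : CP.wRel (g ≫ h) (𝟙 B) := by
      rw [← Quotient.functor_map_eq_iff CP.wRel, Functor.map_comp, hg, hh, e.hom_inv_id,
        CategoryTheory.Functor.map_id]
    obtain ⟨W, a, b, hW, hab⟩ := hgh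
    have hid : 𝟙 B = g ≫ h + (-a) ≫ b := by rw [Preadditive.neg_comp, hab]; abel
    rw [hid]
    exact FactorsThru.add CP.U_add ⟨U₁, g, h, hU₁, rfl⟩ ⟨W, -a, b, hW.1, rfl⟩

end CotorsionPair

/-- Here `A⁺` and `B⁺` are given by their canonical push-out constructions, and `fp` is a
representative of `σ⁺(f)`, i.e. `α_A ≫ fp` agrees with `f ≫ α_B` modulo `𝒲`. -/
theorem stmt5_general (E : ExactStructure C) (CP : CotorsionPair E)
    {A B : C} (f : A ⟶ B)
    {U0A Ap : C} {αA : A ⟶ Ap} {pA : Ap ⟶ U0A}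
    (hU0A : U0A ∈ CP.U) (h3A : E.IsSES αA pA)
    {VB UB W0B U0B Bp : C} {vB : VB ⟶ UB} {uB : UB ⟶ B} {wB' : UB ⟶ W0B}
    {w0B : W0B ⟶ U0B} {αB : B ⟶ Bp} {wB : W0B ⟶ Bp} {pB : Bp ⟶ U0B}
    (hVB : VB ∈ CP.V) (hUB : UB ∈ CP.U) (hW0B : W0B ∈ CP.W) (hU0B : U0B ∈ CP.U)
    (h1B : E.IsSES vB uB) (h2B : E.IsSES wB' w0B)
    (hpoB : IsPushout uB wB' αB wB) (h3B : E.IsSES αB pB)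
    {fp : Ap ⟶ Bp} (hfp : CP.wRel (αA ≫ fp) (f ≫ αB)) :
    (FactorsThru CP.W fp ↔ FactorsThru CP.U f) ∧
    (FactorsThru CP.W (𝟙 Bp) ↔
      ∃ U₁ ∈ CP.U, Nonempty (CP.qf.obj B ≅ CP.qf.obj U₁)) := by
  have hid := CP.factorsThru_W_iff_factorsThru_U_of_wRel hU0B h3B hVB hUB hW0B h1B h2B hpoB h3B
    (f := 𝟙 B) (fp := 𝟙 Bp) (by simpa using CP.wRel_refl αB)
  exact ⟨CP.factorsThru_W_iff_factorsThru_U_of_wRel hU0A h3A hVB hUB hW0B h1B h2B hpoB h3B hfp,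
    hid.trans (CP.factorsThru_U_id_iff B)⟩

/-- `σ⁺(f) = 0` in `𝓑/𝒲` iff `f` factors through `𝒰`; in particular
`σ⁺(B) = 0` iff `B ∈ 𝒰` up to isomorphism in `𝓑/𝒲`. Here `A⁺` and `B⁺` are
given by their canonical push-out constructions, and `fp` is a representative of
`σ⁺(f)`, i.e. `α_A ≫ fp` agrees with `f ≫ α_B` modulo `𝒲`. -/
theorem stmt5 (E : ExactStructure C) (CP : CotorsionPair E)
    (hEP : E.EnoughProj) (hEI : E.EnoughInj)
    {A B : C} (f : A ⟶ B)
    {VA UA W0A U0A Ap : C} {vA : VA ⟶ UA} {uA : UA ⟶ A} {wA' : UA ⟶ W0A}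
    {w0A : W0A ⟶ U0A} {αA : A ⟶ Ap} {wA : W0A ⟶ Ap} {pA : Ap ⟶ U0A}
    (hVA : VA ∈ CP.V) (hUA : UA ∈ CP.U) (hW0A : W0A ∈ CP.W) (hU0A : U0A ∈ CP.U)
    (h1A : E.IsSES vA uA) (h2A : E.IsSES wA' w0A)
    (hpoA : IsPushout uA wA' αA wA) (h3A : E.IsSES αA pA)
    {VB UB W0B U0B Bp : C} {vB : VB ⟶ UB} {uB : UB ⟶ B} {wB' : UB ⟶ W0B}
    {w0B : W0B ⟶ U0B} {αB : B ⟶ Bp} {wB : W0B ⟶ Bp} {pB : Bp ⟶ U0B}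
    (hVB : VB ∈ CP.V) (hUB : UB ∈ CP.U) (hW0B : W0B ∈ CP.W) (hU0B : U0B ∈ CP.U)
    (h1B : E.IsSES vB uB) (h2B : E.IsSES wB' w0B)
    (hpoB : IsPushout uB wB' αB wB) (h3B : E.IsSES αB pB)
    {fp : Ap ⟶ Bp} (hfp : CP.wRel (αA ≫ fp) (f ≫ αB)) :
    (FactorsThru CP.W fp ↔ FactorsThru CP.U f) ∧
    (FactorsThru CP.W (𝟙 Bp) ↔
      ∃ U₁ ∈ CP.U, Nonempty (CP.qf.obj B ≅ CP.qf.obj U₁)) :=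
  stmt5_general E CP f hU0A h3A hVB hUB hW0B hU0B h1B h2B hpoB h3B hfp
end
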